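/- arXiv:1801.09133 — 7 statements merged into one kernel-verified Lean document; each statement's English description precedes it below -/
import Mathlib

section
/- Let G be a finite group, H a subgroup of G minimal with respect to sd(H,G) ≠ 1. If sd(K,G) = 1 for every proper subgroup K of H, then sd(H,G) ≥ 1 − (|L(G)| − |N(G)| − 1)/(|L(H)||L(G)|). -/
open scoped Pointwise

/-- Two subgroups permute if `HK = KH` as subsets. -/
def Permutes {G : Type*} [Group G] (A B : Subgroup G) : Prop :=
  (A : Set G) * (B : Set G) = (B : Set G) * (A : Set G)

/-- The subgroup commutativity degree of a group `G`. -/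
noncomputable def sd (G : Type*) [Group G] : ℚ :=
  (Nat.card {p : Subgroup G × Subgroup G // Permutes p.1 p.2} : ℚ) /
    (Nat.card (Subgroup G) : ℚ) ^ 2

/-- The relative subgroup commutativity degree of a subgroup `H` of `G`. -/
noncomputable def rsd {G : Type*} [Group G] (H : Subgroup G) : ℚ :=
  (Nat.card {p : {K : Subgroup G // K ≤ H} × Subgroup G // Permutes p.1.1 p.2} : ℚ) /
    ((Nat.card {K : Subgroup G // K ≤ H} : ℚ) * (Nat.card (Subgroup G) : ℚ))

lemma permutes_self {G : Type*} [Group G] (A : Subgroup G) : Permutes A A := rfl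

lemma permutes_of_normal {G : Type*} [Group G] (A B : Subgroup G) (hB : B.Normal) :
    Permutes A B := by
  haveI := hB
  unfold Permutes
  rw [← Subgroup.mul_normal A B, ← Subgroup.normal_mul B A, sup_comm]

lemma card_pos_aux {G : Type*} [Group G] [Fintype G] (H : Subgroup G) :
    0 < Nat.card {K : Subgroup G // K ≤ H} := by
  have : Nonempty {K : Subgroup G // K ≤ H} := ⟨⟨⊥, bot_le⟩⟩
  exact Nat.card_pos

lemma rsd_eq_one_of_all {G : Type*} [Group G] [Fintype G] (K : Subgroup G)
    (h : ∀ A : {L : Subgroup G // L ≤ K}, ∀ B : Subgroup G, Permutes A.1 B) :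
    rsd K = 1 := by
  have e : Nat.card {p : {L : Subgroup G // L ≤ K} × Subgroup G // Permutes p.1.1 p.2}
      = Nat.card ({L : Subgroup G // L ≤ K} × Subgroup G) :=
    Nat.card_congr (Equiv.subtypeUnivEquiv (fun p => h p.1 p.2))
  have hm : (0:ℚ) < (Nat.card (Subgroup G) : ℚ) := by
    exact_mod_cast Nat.card_pos
  have hn : (0:ℚ) < (Nat.card {L : Subgroup G // L ≤ K} : ℚ) := by
    exact_mod_cast card_pos_aux K
  rw [rsd, e, Nat.card_prod]
  push_cast
  field_simp

lemma all_of_rsd_eq_one {G : Type*} [Group G] [Fintype G] (K : Subgroup G)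
    (h : rsd K = 1) : ∀ A : {L : Subgroup G // L ≤ K}, ∀ B : Subgroup G, Permutes A.1 B := by
  by_contra hc
  push_neg at hc
  obtain ⟨A, B, hAB⟩ := hc
  classical
  have hlt : Nat.card {p : {L : Subgroup G // L ≤ K} × Subgroup G // Permutes p.1.1 p.2}
      < Nat.card ({L : Subgroup G // L ≤ K} × Subgroup G) := by
    rw [Nat.card_eq_fintype_card, Nat.card_eq_fintype_card]
    exact Fintype.card_subtype_lt (x := (A, B)) hAB
  rw [Nat.card_prod] at hlt
  have hm : (0:ℚ) < (Nat.card (Subgroup G) : ℚ) := by exact_mod_cast Nat.card_pos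
  have hn : (0:ℚ) < (Nat.card {L : Subgroup G // L ≤ K} : ℚ) := by
    exact_mod_cast card_pos_aux K
  have : rsd K < 1 := by
    rw [rsd, div_lt_one (by positivity)]
    exact_mod_cast hlt
  exact absurd h (ne_of_lt this)

theorem rsd_lower_bound_of_minimal (G : Type*) [Group G] [Fintype G] (H : Subgroup G)
    (hH : rsd H ≠ 1) (hmin : ∀ K : Subgroup G, K < H → rsd K = 1) :
    rsd H ≥ 1 - ((Nat.card (Subgroup G) : ℚ) - (Nat.card {K : Subgroup G // K.Normal} : ℚ) - 1) /
      ((Nat.card {K : Subgroup G // K ≤ H} : ℚ) * (Nat.card (Subgroup G) : ℚ)) := by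
  classical
  -- H is not normal
  have hHn : ¬ H.Normal := by
    intro hn
    apply hH
    apply rsd_eq_one_of_all
    intro A B
    rcases lt_or_eq_of_le A.2 with hlt | heq
    · exact all_of_rsd_eq_one A.1 (hmin A.1 hlt) ⟨A.1, le_rfl⟩ B
    · rw [heq]; exact Eq.symm (permutes_of_normal B H hn)
  -- the set of bad pairs
  set Bad := {p : {K : Subgroup G // K ≤ H} × Subgroup G // ¬ Permutes p.1.1 p.2} with hBad
  have key : ∀ p : Bad, p.1.1.1 = H := by
    intro p
    rcases lt_or_eq_of_le p.1.1.2 with hlt | heq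
    · exact absurd (all_of_rsd_eq_one p.1.1.1 (hmin _ hlt) ⟨p.1.1.1, le_rfl⟩ p.1.2) p.2
    · exact heq
  -- injection of Bad ⊕ normals ⊕ unit into subgroups
  let f : Bad ⊕ {K : Subgroup G // K.Normal} ⊕ PUnit.{1} → Subgroup G := fun x =>
    match x with
    | .inl p => p.1.2
    | .inr (.inl K) => K.1
    | .inr (.inr _) => H
  have hBadNotNormal : ∀ p : Bad, ¬ (p.1.2).Normal := fun p hn =>
    p.2 (permutes_of_normal p.1.1.1 p.1.2 hn)
  have hBadNeH : ∀ p : Bad, p.1.2 ≠ H := by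
    intro p he
    apply p.2
    rw [he, key p]
    exact permutes_self H
  have hfinj : Function.Injective f := by
    rintro (p | K | u) (q | L | v) hfq <;> simp only [f] at hfq
    · congr 1
      have h1 : p.1.1 = q.1.1 := Subtype.ext ((key p).trans (key q).symm)
      exact Subtype.ext (Prod.ext h1 hfq)
    · exact absurd (hfq.symm ▸ L.2) (hBadNotNormal p)
    · exact absurd hfq (hBadNeH p)
    · exact absurd (hfq ▸ K.2) (hBadNotNormal q)
    · rw [Subtype.ext hfq]
    · exact absurd (hfq ▸ K.2) hHn
    · exact absurd hfq.symm (hBadNeH q)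
    · exact absurd (hfq ▸ L.2) hHn
    · rw [Subsingleton.elim u v]
  have hcardle : Nat.card Bad + Nat.card {K : Subgroup G // K.Normal} + 1
      ≤ Nat.card (Subgroup G) := by
    have := Nat.card_le_card_of_injective f hfinj
    simpa [Nat.card_sum, add_assoc] using this
  -- good + bad = total
  have hsplit : Nat.card {p : {K : Subgroup G // K ≤ H} × Subgroup G // Permutes p.1.1 p.2}
      + Nat.card Bad
      = Nat.card {K : Subgroup G // K ≤ H} * Nat.card (Subgroup G) := by
    rw [← Nat.card_prod, hBad]
    rw [Nat.card_eq_fintype_card, Nat.card_eq_fintype_card, Nat.card_eq_fintype_card]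
    rw [Fintype.card_subtype_compl]
    have hle : Fintype.card {p : {K : Subgroup G // K ≤ H} × Subgroup G // Permutes p.1.1 p.2}
        ≤ Fintype.card ({K : Subgroup G // K ≤ H} × Subgroup G) := Fintype.card_subtype_le _
    omega
  -- final arithmetic
  set m : ℚ := (Nat.card (Subgroup G) : ℚ) with hm
  set n : ℚ := (Nat.card {K : Subgroup G // K ≤ H} : ℚ) with hn
  set N : ℚ := (Nat.card {K : Subgroup G // K.Normal} : ℚ) with hN
  set S : ℚ := (Nat.card {p : {K : Subgroup G // K ≤ H} × Subgroup G // Permutes p.1.1 p.2} : ℚ)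
    with hS
  set b : ℚ := (Nat.card Bad : ℚ) with hb
  have hmpos : (0:ℚ) < m := by rw [hm]; exact_mod_cast Nat.card_pos
  have hnpos : (0:ℚ) < n := by rw [hn]; exact_mod_cast card_pos_aux H
  have h1 : b + N + 1 ≤ m := by rw [hb, hN, hm]; exact_mod_cast hcardle
  have h2 : S + b = n * m := by rw [hS, hb, hn, hm]; exact_mod_cast hsplit
  rw [rsd, ← hS, ← hn, ← hm, ge_iff_le, sub_le_iff_le_add, ← add_div,
    le_div_iff₀ (by positivity), one_mul]
  linarith
end

section
/- Let p be a prime and n a positive integer. The rational numbers (n(2n+p+1)+2(n+1))/((n+1)(2n+p+1)) and ((2n+1)(2n+p+1)+2p(n+1))/(2n+p+1)² are equal if and only if p = 2 + 1/n or p = 1; in particular, for p, n positive integers with p prime, equality holds iff (p,n) = (3,1). -/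
theorem sd_equality_characterization (p n : ℕ) (hp : p.Prime) (hn : 1 ≤ n) :
    ((((n : ℚ) * (2 * n + p + 1) + 2 * (n + 1)) / ((n + 1) * (2 * n + p + 1)) =
        ((2 * (n : ℚ) + 1) * (2 * n + p + 1) + 2 * p * (n + 1)) / (2 * n + p + 1) ^ 2) ↔
      ((p : ℚ) = 2 + 1 / n ∨ (p : ℚ) = 1)) ∧
    ((((n : ℚ) * (2 * n + p + 1) + 2 * (n + 1)) / ((n + 1) * (2 * n + p + 1)) =
        ((2 * (n : ℚ) + 1) * (2 * n + p + 1) + 2 * p * (n + 1)) / (2 * n + p + 1) ^ 2) ↔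
      (p = 3 ∧ n = 1)) := by
  have hn1 : (1 : ℚ) ≤ (n : ℚ) := by exact_mod_cast hn
  have hnq : (n : ℚ) ≠ 0 := by positivity
  have hA : ((n : ℚ) + 1) ≠ 0 := by positivity
  have hB : (2 * (n : ℚ) + p + 1) ≠ 0 := by positivity
  have hB2 : (2 * (n : ℚ) + p + 1) ^ 2 ≠ 0 := pow_ne_zero _ hB
  have hAB : ((n : ℚ) + 1) * (2 * (n : ℚ) + p + 1) ≠ 0 := mul_ne_zero hA hB
  have key : ((((n : ℚ) * (2 * n + p + 1) + 2 * (n + 1)) / ((n + 1) * (2 * n + p + 1)) =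
        ((2 * (n : ℚ) + 1) * (2 * n + p + 1) + 2 * p * (n + 1)) / (2 * n + p + 1) ^ 2) ↔
      ((p : ℚ) = 2 + 1 / n ∨ (p : ℚ) = 1)) := by
    rw [div_eq_div_iff hAB hB2]
    constructor
    · intro h
      have h2 : (((p : ℚ) - 1) * ((n : ℚ) * p - 2 * n - 1)) * (2 * (n : ℚ) + p + 1) = 0 := by
        linear_combination h
      have h3 := (mul_eq_zero.mp h2).resolve_right hB
      rcases mul_eq_zero.mp h3 with h4 | h4
      · right; linarith
      · left
        field_simp
        linarith
    · rintro (h | h)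
      · have h2 : (n : ℚ) * p = 2 * n + 1 := by
          field_simp at h
          linarith
        linear_combination ((p : ℚ) - 1) * (2 * (n : ℚ) + p + 1) * h2
      · linear_combination ((n : ℚ) * p - 2 * n - 1) * (2 * (n : ℚ) + p + 1) * h
  refine ⟨key, key.trans ?_⟩
  constructor
  · rintro (h | h)
    · have h2 : (n : ℚ) * p = 2 * n + 1 := by
        field_simp at h
        linarith
      have h3 : n * p = 2 * n + 1 := by exact_mod_cast h2
      rcases Nat.exists_eq_add_of_le hp.two_le with ⟨k, rfl⟩
      have h4 : n * k = 1 := by nlinarith [h3]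
      have h5 : n = 1 ∧ k = 1 := ⟨Nat.eq_one_of_mul_eq_one_right h4, Nat.eq_one_of_mul_eq_one_left h4⟩
      exact ⟨by omega, h5.1⟩
    · have : p = 1 := by exact_mod_cast h
      exact absurd this hp.one_lt.ne'
  · rintro ⟨rfl, rfl⟩
    left; norm_num
end

section
/- Let n be an odd positive integer, n = p₁^{α₁}⋯p_k^{α_k} with odd primes p_i, satisfying σ(n) − τ(n) = 2τ(n/p_i^{α_i}) for every i = 1,…,k (where σ and τ denote the sum and number of divisors). Then n = 3. -/
theorem odd_case_n_eq_three (n : ℕ) (hn : 1 < n) (hodd : Odd n)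
    (h : ∀ p : ℕ, p.Prime → p ∣ n →
      (∑ d ∈ n.divisors, d) - n.divisors.card =
        2 * (n / p ^ n.factorization p).divisors.card) :
    n = 3 := by
  have hn0 : n ≠ 0 := by omega
  set p := n.minFac with hp
  have hpp : p.Prime := Nat.minFac_prime (by omega)
  have hpd : p ∣ n := Nat.minFac_dvd n
  have hp3 : 3 ≤ p := by
    have h2 : p ≠ 2 := by
      intro h2
      exact (Nat.not_even_iff_odd.mpr hodd) ((even_iff_two_dvd).mpr (h2 ▸ hpd))
    rcases hpp.two_le.lt_or_eq with h' | h'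
    · omega
    · omega
  have key := h p hpp hpd
  set α := n.factorization p with hα
  have hα1 : 1 ≤ α := (hpp.factorization_pos_of_dvd hn0 hpd)
  set m := n / p ^ α with hm
  have hnm : p ^ α * m = n := Nat.ordProj_mul_ordCompl_eq_self n p
  have hm0 : m ≠ 0 := by
    intro h0; rw [h0, mul_zero] at hnm; exact hn0 hnm.symm
  have hcop : (p ^ α).Coprime m := Nat.Coprime.pow_left _ (Nat.coprime_ordCompl hpp hn0)
  -- multiplicative formulas
  have hσ : ∑ d ∈ n.divisors, d =
      (∑ k ∈ Finset.range (α + 1), p ^ k) * ∑ d ∈ m.divisors, d := by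
    rw [← hnm, hcop.sum_divisors_mul, ← ArithmeticFunction.sigma_one_apply (p ^ α),
      ArithmeticFunction.sigma_one_apply_prime_pow hpp]
  have hτ : n.divisors.card = (α + 1) * m.divisors.card := by
    rw [← hnm, hcop.card_divisors_mul, ← ArithmeticFunction.sigma_zero_apply (p ^ α),
      ArithmeticFunction.sigma_zero_apply_prime_pow hpp]
  -- σ ≥ τ for any positive number
  have sigma_ge : ∀ k : ℕ, k ≠ 0 → k.divisors.card ≤ ∑ d ∈ k.divisors, d := by
    intro k hk
    calc k.divisors.card = ∑ _d ∈ k.divisors, 1 := by simp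
    _ ≤ ∑ d ∈ k.divisors, d := Finset.sum_le_sum fun d hd =>
        Nat.one_le_iff_ne_zero.mpr (Nat.pos_of_mem_divisors hd).ne'
  have hστ : n.divisors.card ≤ ∑ d ∈ n.divisors, d := sigma_ge n hn0
  have key' : ∑ d ∈ n.divisors, d = 2 * m.divisors.card + n.divisors.card := by
    omega
  have hτm1 : 1 ≤ m.divisors.card := by
    have : 1 ∈ m.divisors := Nat.one_mem_divisors.mpr hm0
    exact Finset.card_pos.mpr ⟨1, this⟩
  have hσm : m.divisors.card ≤ ∑ d ∈ m.divisors, d := sigma_ge m hm0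
  -- bound for sigma(p^α): ≥ 1 + α * p
  have hsp : 1 + α * p ≤ ∑ k ∈ Finset.range (α + 1), p ^ k := by
    calc 1 + α * p = 1 ^ 0 + ∑ _k ∈ Finset.range α, p := by simp [mul_comm]
    _ ≤ p ^ 0 + ∑ k ∈ Finset.range α, p ^ (k + 1) := by
        gcongr with k hk
        · exact Nat.one_le_iff_ne_zero.mpr hpp.pos.ne'
        · calc p = p ^ 1 := (pow_one p).symm
          _ ≤ p ^ (k + 1) := Nat.pow_le_pow_right hpp.pos (by omega)
    _ = ∑ k ∈ Finset.range (α + 1), p ^ k := by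
        rw [Finset.sum_range_succ' (fun k => p ^ k) α]; ring
  -- main equation: (σ(p^α)) * σ(m) = (α + 3) * τ(m)
  have main : (∑ k ∈ Finset.range (α + 1), p ^ k) * (∑ d ∈ m.divisors, d)
      = (α + 3) * m.divisors.card := by
    rw [← hσ, key', hτ]; ring
  -- derive α = 1
  have hineq : (1 + α * p) * m.divisors.card ≤ (α + 3) * m.divisors.card := by
    rw [← main]
    exact Nat.mul_le_mul hsp hσm
  have hα_eq : α = 1 := by
    have := Nat.le_of_mul_le_mul_right (by simpa [mul_comm] using hineq) (by omega)
    nlinarith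
  clear_value m
  clear_value α
  subst hα_eq
  -- now (1 + p) * σ(m) = 4 * τ(m), with p ≥ 3, σ(m) ≥ τ(m)
  have main2 : (1 + p) * (∑ d ∈ m.divisors, d) = 4 * m.divisors.card := by
    have : ∑ k ∈ Finset.range 2, p ^ k = 1 + p := by simp [Finset.sum_range_succ]
    rw [this] at main; omega
  have e1 : 4 * (∑ d ∈ m.divisors, d) ≤ 4 * m.divisors.card :=
    main2 ▸ Nat.mul_le_mul_right _ (by omega : 4 ≤ 1 + p)
  have hστ_eq : ∑ d ∈ m.divisors, d = m.divisors.card := by omega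
  have hp_eq : p = 3 := by
    rw [hστ_eq] at main2
    have := Nat.eq_of_mul_eq_mul_right (by omega : 0 < m.divisors.card) main2
    omega
  have hσm_eq : (∑ d ∈ m.divisors, d = m.divisors.card) ∧ p = 3 := ⟨hστ_eq, hp_eq⟩
  -- σ(m) = τ(m) forces m = 1
  have hm1 : m = 1 := by
    by_contra hm1
    have hm2 : 2 ≤ m := by omega
    have : m.divisors.card < ∑ d ∈ m.divisors, d := by
      have hmem : m ∈ m.divisors := Nat.mem_divisors_self m hm0
      calc m.divisors.card = ∑ _d ∈ m.divisors, 1 := by simp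
      _ < ∑ d ∈ m.divisors, d := by
          apply Finset.sum_lt_sum
          · intro d hd; exact Nat.one_le_iff_ne_zero.mpr (Nat.pos_of_mem_divisors hd).ne'
          · exact ⟨m, hmem, by omega⟩
    omega
  rw [← hnm, hσm_eq.2, hm1]; norm_num
end

section
/- Let m ≥ 1 be an integer and n' an odd positive integer with n' = p₁^{α₁}⋯p_k^{α_k} (k ≥ 1, p_i odd primes). If (2^{m+1} − 1)σ(n') = (2m+1)(α+1)^{k−1}(α+3) where α₁ = ⋯ = α_k = α, then m = 1, k = 1, α = 1 and p₁ = 3 (i.e., n' = 3, so n = 2^m n' = 6). -/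
open Finset

lemma aux_sum_odds (n : ℕ) : ∑ j ∈ range n, (2*j+1) = n^2 := by
  induction n with
  | zero => simp
  | succ n ih => rw [sum_range_succ, ih]; ring

lemma aux_three_pow (j : ℕ) : 2*j+1 ≤ 3^j := by
  induction j with
  | zero => simp
  | succ j ih =>
    calc 2*(j+1)+1 ≤ 3*(2*j+1) := by omega
    _ ≤ 3*3^j := Nat.mul_le_mul_left 3 ih
    _ = 3^(j+1) := by ring

lemma aux_two_pow (m : ℕ) (hm : 2 ≤ m) : 2*m+2 < 2^(m+1) := by
  induction m with
  | zero => omega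
  | succ m ih =>
    rcases Nat.lt_or_ge m 2 with h | h
    · interval_cases m <;> simp_all
    · have := ih h
      have : 2^(m+1+1) = 2*2^(m+1) := by ring
      omega

lemma aux_eq_of_mul (a b c d : ℕ) (hac : c ≤ a) (hbd : d ≤ b) (hc : 0 < c) (hd : 0 < d)
    (h : a * b = c * d) : a = c ∧ b = d := by
  constructor <;> nlinarith

theorem even_case_n_eq_six (m k α : ℕ) (hm : 1 ≤ m) (hk : 1 ≤ k) (hα : 1 ≤ α)
    (p : Fin k → ℕ) (hp : ∀ i, (p i).Prime) (hodd : ∀ i, p i ≠ 2)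
    (hinj : Function.Injective p) (n' : ℕ) (hn' : n' = ∏ i, p i ^ α)
    (h : (2 ^ (m + 1) - 1) * ∑ d ∈ n'.divisors, d = (2 * m + 1) * (α + 1) ^ (k - 1) * (α + 3)) :
    m = 1 ∧ k = 1 ∧ α = 1 ∧ ∀ i, p i = 3 := by
  have hp3 : ∀ i, 3 ≤ p i := fun i => by
    have := (hp i).two_le; have := hodd i; omega
  -- σ(n') as a product
  have hσ : ∑ d ∈ n'.divisors, d = ∏ i, ∑ j ∈ range (α+1), p i ^ j := by
    have hcop : (↑(univ : Finset (Fin k)) : Set (Fin k)).Pairwise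
        (Function.onFun Nat.Coprime fun i => p i ^ α) := by
      intro i _ j _ hij
      exact Nat.Coprime.pow _ _ ((Nat.coprime_primes (hp i) (hp j)).mpr
        (fun he => hij (hinj he)))
    have h1 := ArithmeticFunction.IsMultiplicative.map_prod (fun i => p i ^ α)
      (ArithmeticFunction.isMultiplicative_sigma (k := 1)) univ hcop
    rw [hn', ← ArithmeticFunction.sigma_one_apply, h1]
    exact Finset.prod_congr rfl (fun i _ => by
      rw [ArithmeticFunction.sigma_one_apply, Nat.sum_divisors_prime_pow (hp i)])
  -- each factor ≥ (α+1)^2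
  have hfac : ∀ i : Fin k, (α+1)^2 ≤ ∑ j ∈ range (α+1), p i ^ j := fun i => by
    calc (α+1)^2 = ∑ j ∈ range (α+1), (2*j+1) := (aux_sum_odds _).symm
    _ ≤ ∑ j ∈ range (α+1), p i ^ j := Finset.sum_le_sum (fun j _ => by
        calc 2*j+1 ≤ 3^j := aux_three_pow j
        _ ≤ p i ^ j := Nat.pow_le_pow_left (hp3 i) j)
  have hprodge : (α+1)^(2*k) ≤ ∑ d ∈ n'.divisors, d := by
    rw [hσ]
    calc (α+1)^(2*k) = ∏ _i : Fin k, (α+1)^2 := by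
          rw [Finset.prod_const, card_univ, Fintype.card_fin, ← pow_mul, mul_comm]
    _ ≤ ∏ i, ∑ j ∈ range (α+1), p i ^ j :=
        Finset.prod_le_prod (fun _ _ => Nat.zero_le _) (fun i _ => hfac i)
  -- chain: A ≤ B ≤ C
  have hAB : (α+1)^(k-1) * (α+3) ≤ (α+1)^(k+1) := by
    have h1 : α+3 ≤ (α+1)^2 := by nlinarith
    calc (α+1)^(k-1) * (α+3) ≤ (α+1)^(k-1) * (α+1)^2 := Nat.mul_le_mul_left _ h1
    _ = (α+1)^(k-1+2) := (pow_add _ _ _).symm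
    _ = (α+1)^(k+1) := by congr 1; omega
  have hBC : (α+1)^(k+1) ≤ (α+1)^(2*k) := Nat.pow_le_pow_right (by omega) (by omega)
  have hσge : (α+1)^(k-1) * (α+3) ≤ ∑ d ∈ n'.divisors, d := le_trans hAB (le_trans hBC hprodge)
  -- m side
  have hmge : 2*m+1 ≤ 2^(m+1) - 1 := by
    have : m < 2^m := Nat.lt_two_pow_self
    have : 2^(m+1) = 2*2^m := by ring
    omega
  have hpos1 : 0 < 2*m+1 := by omega
  have hpos2 : 0 < (α+1)^(k-1) * (α+3) := by positivity
  rw [mul_assoc] at h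
  obtain ⟨he1, he2⟩ := aux_eq_of_mul _ _ _ _ hmge hσge hpos1 hpos2 h
  -- m = 1
  have hm1 : m = 1 := by
    by_contra hne
    have h2 : 2 ≤ m := by omega
    have := aux_two_pow m h2
    have : 1 ≤ 2^(m+1) := Nat.one_le_two_pow
    omega
  -- equality chain forces A = B = C
  have heqC : (α+1)^(k-1) * (α+3) = (α+1)^(2*k) :=
    le_antisymm (le_trans hAB hBC) (he2 ▸ hprodge)
  have heqB : (α+1)^(k-1) * (α+3) = (α+1)^(k+1) :=
    le_antisymm hAB (by rw [heqC]; exact hBC)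
  have hα1 : α = 1 := by
    have : (α+1)^(k+1) = (α+1)^(k-1) * (α+1)^2 := by
      rw [← pow_add]; congr 1; omega
    rw [this] at heqB
    have h3 : α + 3 = (α+1)^2 := Nat.eq_of_mul_eq_mul_left (by positivity) heqB
    nlinarith
  have hk1 : k = 1 := by
    have hBC' : (α+1)^(k+1) = (α+1)^(2*k) := by rw [← heqB, heqC]
    have := Nat.pow_right_injective (by omega : 2 ≤ α+1) hBC'
    omega
  subst hα1; subst hk1; subst hm1
  refine ⟨rfl, rfl, rfl, fun i => ?_⟩
  have hi : i = 0 := Subsingleton.elim _ _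
  subst hi
  have hσval : ∑ d ∈ n'.divisors, d = 4 := by rw [he2]; norm_num
  rw [hσ] at hσval
  simp [Fin.prod_univ_one, Finset.sum_range_succ] at hσval
  omega
end

section
/- For the dihedral group D₁₂ of order 12, sd(H, D₁₂) = 13/16 for H = ⟨y⟩ ≅ Z₂ a reflection subgroup, while sd(D₁₂) = sd(D₁₂, D₁₂) = 101/128; in particular 13/16 ≠ 101/128, so the function H ↦ sd(H, D₁₂) takes at least three distinct values (1, 13/16, 101/128). -/
open scoped Pointwise

namespace D12Aux

abbrev G6 := DihedralGroup 6

def IsSubgroupF (s : Finset G6) : Prop := (1:G6) ∈ s ∧ ∀ a ∈ s, ∀ b ∈ s, a * b⁻¹ ∈ s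

instance : DecidablePred IsSubgroupF := fun _ => instDecidableAnd

open DihedralGroup in
def SGL : Finset (Finset G6) :=
  { {r 0},
    {r 0, r 3},
    {r 0, r 2, r 4},
    {r 0, r 1, r 2, r 3, r 4, r 5},
    {r 0, sr 0},
    {r 0, sr 1},
    {r 0, sr 2},
    {r 0, sr 3},
    {r 0, sr 4},
    {r 0, sr 5},
    {r 0, r 3, sr 0, sr 3},
    {r 0, r 3, sr 1, sr 4},
    {r 0, r 3, sr 2, sr 5},
    {r 0, r 2, r 4, sr 0, sr 2, sr 4},
    {r 0, r 2, r 4, sr 1, sr 3, sr 5},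
    {r 0, r 1, r 2, r 3, r 4, r 5, sr 0, sr 1, sr 2, sr 3, sr 4, sr 5} }

set_option maxRecDepth 100000 in
set_option maxHeartbeats 4000000 in
lemma filter_eq : Finset.univ.filter IsSubgroupF = SGL := by decide

lemma complete : ∀ s : Finset G6, IsSubgroupF s ↔ s ∈ SGL := by
  intro s
  rw [← filter_eq, Finset.mem_filter]
  simp

noncomputable def toF (H : Subgroup G6) : Finset G6 := (H : Set G6).toFinite.toFinset

lemma mem_toF {H : Subgroup G6} {g : G6} : g ∈ toF H ↔ g ∈ H := Set.Finite.mem_toFinset _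

lemma coe_toF (H : Subgroup G6) : (toF H : Set G6) = (H : Set G6) := Set.Finite.coe_toFinset _

def fromF (s : Finset G6) (hs : IsSubgroupF s) : Subgroup G6 where
  carrier := ↑s
  one_mem' := hs.1
  inv_mem' := fun {a} ha => by simpa using hs.2 1 hs.1 a ha
  mul_mem' := fun {a b} ha hb => by
    have hb' : b⁻¹ ∈ s := by simpa using hs.2 1 hs.1 b hb
    simpa using hs.2 a ha b⁻¹ hb'

lemma mem_fromF {s : Finset G6} {hs : IsSubgroupF s} {g : G6} : g ∈ fromF s hs ↔ g ∈ s :=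
  Iff.rfl

lemma toF_isSubgroupF (H : Subgroup G6) : IsSubgroupF (toF H) := by
  refine ⟨mem_toF.mpr H.one_mem, fun a ha b hb => ?_⟩
  rw [mem_toF] at *
  exact H.mul_mem ha (H.inv_mem hb)

noncomputable def equivF : Subgroup G6 ≃ {s : Finset G6 // s ∈ SGL} where
  toFun H := ⟨toF H, (complete _).mp (toF_isSubgroupF H)⟩
  invFun s := fromF s.1 ((complete _).mpr s.2)
  left_inv H := by
    ext g
    rw [mem_fromF, mem_toF]
  right_inv s := by
    apply Subtype.ext
    ext g
    rw [mem_toF, mem_fromF]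

lemma permutes_iff (A B : Subgroup G6) :
    Permutes A B ↔ toF A * toF B = toF B * toF A := by
  rw [← Finset.coe_inj, Finset.coe_mul, Finset.coe_mul, coe_toF, coe_toF]
  rfl

lemma le_iff (A B : Subgroup G6) : A ≤ B ↔ toF A ⊆ toF B := by
  rw [← Finset.coe_subset, coe_toF, coe_toF]
  exact Iff.rfl

def F0 : Finset G6 := {1, DihedralGroup.sr 0}

lemma h0 : IsSubgroupF F0 := by decide

lemma zpowers_eq : Subgroup.zpowers (DihedralGroup.sr 0 : G6) = fromF F0 h0 := by
  apply le_antisymm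
  · rw [Subgroup.zpowers_le]
    rw [mem_fromF]
    decide
  · intro g hg
    rw [mem_fromF] at hg
    fin_cases hg
    · exact one_mem _
    · exact Subgroup.mem_zpowers _

lemma toF_zpowers : toF (Subgroup.zpowers (DihedralGroup.sr 0 : G6)) = F0 := by
  ext g
  rw [mem_toF, zpowers_eq, mem_fromF]

lemma toF_top : toF (⊤ : Subgroup G6) = Finset.univ := by
  ext g
  simp [mem_toF]

lemma toF_bot : toF (⊥ : Subgroup G6) = {(1 : G6)} := by
  ext g
  simp [mem_toF, Subgroup.mem_bot]

/-- generic transfer of the pair-count for `rsd`. -/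
noncomputable def pairEquiv (H : Subgroup G6) (F : Finset G6) (hF : toF H = F) :
    {p : {K : Subgroup G6 // K ≤ H} × Subgroup G6 // Permutes p.1.1 p.2} ≃
    {q : {s : {s : Finset G6 // s ∈ SGL} // s.1 ⊆ F} × {s : Finset G6 // s ∈ SGL} //
        q.1.1.1 * q.2.1 = q.2.1 * q.1.1.1} :=
  Equiv.subtypeEquiv
    ((equivF.subtypeEquiv (fun K => by rw [le_iff, hF]; exact Iff.rfl)).prodCongr equivF)
    (fun p => permutes_iff p.1.1 p.2)

noncomputable def subEquiv (H : Subgroup G6) (F : Finset G6) (hF : toF H = F) :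
    {K : Subgroup G6 // K ≤ H} ≃ {s : {s : Finset G6 // s ∈ SGL} // s.1 ⊆ F} :=
  equivF.subtypeEquiv (fun K => by rw [le_iff, hF]; exact Iff.rfl)

noncomputable def allPairEquiv :
    {p : Subgroup G6 × Subgroup G6 // Permutes p.1 p.2} ≃
    {q : {s : Finset G6 // s ∈ SGL} × {s : Finset G6 // s ∈ SGL} //
        q.1.1 * q.2.1 = q.2.1 * q.1.1} :=
  Equiv.subtypeEquiv (equivF.prodCongr equivF) (fun p => permutes_iff p.1 p.2)

set_option maxRecDepth 100000 in
set_option maxHeartbeats 4000000 in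
lemma card_SGL : Nat.card {s : Finset G6 // s ∈ SGL} = 16 := by
  rw [Nat.card_eq_fintype_card]; decide

set_option maxRecDepth 100000 in
set_option maxHeartbeats 4000000 in
lemma card_allPairs :
    Nat.card {q : {s : Finset G6 // s ∈ SGL} × {s : Finset G6 // s ∈ SGL} //
        q.1.1 * q.2.1 = q.2.1 * q.1.1} = 202 := by
  rw [Nat.card_eq_fintype_card]; decide

set_option maxRecDepth 100000 in
set_option maxHeartbeats 4000000 in
lemma card_subF0 : Nat.card {s : {s : Finset G6 // s ∈ SGL} // s.1 ⊆ F0} = 2 := by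
  rw [Nat.card_eq_fintype_card]; decide

set_option maxRecDepth 100000 in
set_option maxHeartbeats 4000000 in
lemma card_pairsF0 :
    Nat.card {q : {s : {s : Finset G6 // s ∈ SGL} // s.1 ⊆ F0} × {s : Finset G6 // s ∈ SGL} //
        q.1.1.1 * q.2.1 = q.2.1 * q.1.1.1} = 26 := by
  rw [Nat.card_eq_fintype_card]; decide

set_option maxRecDepth 100000 in
set_option maxHeartbeats 4000000 in
lemma card_subTop : Nat.card {s : {s : Finset G6 // s ∈ SGL} // s.1 ⊆ Finset.univ} = 16 := by
  rw [Nat.card_eq_fintype_card]; decide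

set_option maxRecDepth 100000 in
set_option maxHeartbeats 4000000 in
lemma card_pairsTop :
    Nat.card {q : {s : {s : Finset G6 // s ∈ SGL} // s.1 ⊆ Finset.univ} × {s : Finset G6 // s ∈ SGL} //
        q.1.1.1 * q.2.1 = q.2.1 * q.1.1.1} = 202 := by
  rw [Nat.card_eq_fintype_card]; decide

set_option maxRecDepth 100000 in
set_option maxHeartbeats 4000000 in
lemma card_subBot : Nat.card {s : {s : Finset G6 // s ∈ SGL} // s.1 ⊆ {(1 : G6)}} = 1 := by
  rw [Nat.card_eq_fintype_card]; decide

set_option maxRecDepth 100000 in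
set_option maxHeartbeats 4000000 in
lemma card_pairsBot :
    Nat.card {q : {s : {s : Finset G6 // s ∈ SGL} // s.1 ⊆ {(1 : G6)}} × {s : Finset G6 // s ∈ SGL} //
        q.1.1.1 * q.2.1 = q.2.1 * q.1.1.1} = 16 := by
  rw [Nat.card_eq_fintype_card]; decide

lemma card_subgroup : Nat.card (Subgroup G6) = 16 := by
  rw [Nat.card_congr equivF]; exact card_SGL

lemma rsd_eq (H : Subgroup G6) (F : Finset G6) (hF : toF H = F)
    (a b : ℕ)
    (ha : Nat.card {q : {s : {s : Finset G6 // s ∈ SGL} // s.1 ⊆ F} × {s : Finset G6 // s ∈ SGL} //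
        q.1.1.1 * q.2.1 = q.2.1 * q.1.1.1} = a)
    (hb : Nat.card {s : {s : Finset G6 // s ∈ SGL} // s.1 ⊆ F} = b) :
    rsd H = (a : ℚ) / ((b : ℚ) * 16) := by
  unfold rsd
  rw [Nat.card_congr (pairEquiv H F hF), Nat.card_congr (subEquiv H F hF), ha, hb,
    card_subgroup]
  norm_num

end D12Aux

theorem dihedral12_three_rsd_values :
    rsd (Subgroup.zpowers (DihedralGroup.sr 0 : DihedralGroup 6)) = 13 / 16 ∧
    rsd (⊤ : Subgroup (DihedralGroup 6)) = 101 / 128 ∧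
    sd (DihedralGroup 6) = 101 / 128 ∧
    rsd (⊥ : Subgroup (DihedralGroup 6)) = 1 ∧
    (13 : ℚ) / 16 ≠ 101 / 128 := by
  refine ⟨?_, ?_, ?_, ?_, by norm_num⟩
  · rw [D12Aux.rsd_eq _ _ D12Aux.toF_zpowers 26 2 D12Aux.card_pairsF0 D12Aux.card_subF0]
    norm_num
  · rw [D12Aux.rsd_eq _ _ D12Aux.toF_top 202 16 D12Aux.card_pairsTop D12Aux.card_subTop]
    norm_num
  · unfold sd
    rw [Nat.card_congr D12Aux.allPairEquiv, D12Aux.card_allPairs, D12Aux.card_subgroup]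
    norm_num
  · rw [D12Aux.rsd_eq _ _ D12Aux.toF_bot 16 1 D12Aux.card_pairsBot D12Aux.card_subBot]
    norm_num
end

section
/- The number of subgroups of the dihedral group D_{2n} equals τ(n) + σ(n), where τ(n) and σ(n) are the number and sum of divisors of n respectively. -/
open DihedralGroup AddSubgroup

namespace DihedralCount

variable {n : ℕ}

@[simp] lemma r_inv (i : ZMod n) : (r i)⁻¹ = r (-i) := rfl
@[simp] lemma sr_inv (i : ZMod n) : (sr i)⁻¹ = sr i := rfl

/-- The cyclic subgroup of the dihedral group corresponding to a subgroup of rotations. -/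
def cyc (A : AddSubgroup (ZMod n)) : Subgroup (DihedralGroup n) where
  carrier := {x | match x with | r i => i ∈ A | sr _ => False}
  one_mem' := by show (0 : ZMod n) ∈ A; exact A.zero_mem
  mul_mem' := by
    rintro (a | a) (b | b) ha hb
    · exact A.add_mem ha hb
    · exact hb.elim
    · exact ha.elim
    · exact ha.elim
  inv_mem' := by
    rintro (a | a) ha
    · exact A.neg_mem ha
    · exact ha.elim

@[simp] lemma r_mem_cyc {A : AddSubgroup (ZMod n)} {i : ZMod n} : r i ∈ cyc A ↔ i ∈ A := Iff.rfl
@[simp] lemma sr_not_mem_cyc {A : AddSubgroup (ZMod n)} {k : ZMod n} : sr k ∉ cyc A := fun h => h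

/-- The dihedral subgroup with rotation part `A` containing `sr j`. -/
def dih (A : AddSubgroup (ZMod n)) (j : ZMod n) : Subgroup (DihedralGroup n) where
  carrier := {x | match x with | r i => i ∈ A | sr k => k - j ∈ A}
  one_mem' := by show (0 : ZMod n) ∈ A; exact A.zero_mem
  mul_mem' := by
    rintro (a | a) (b | b) ha hb
    · exact A.add_mem ha hb
    · show b - a - j ∈ A
      have := A.sub_mem hb ha
      convert this using 1; ring
    · show a + b - j ∈ A
      have := A.add_mem ha hb
      convert this using 1; ring
    · show b - a ∈ A
      have := A.sub_mem hb ha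
      convert this using 1; ring
  inv_mem' := by
    rintro (a | a) ha
    · exact A.neg_mem ha
    · exact ha

@[simp] lemma r_mem_dih {A : AddSubgroup (ZMod n)} {j i : ZMod n} : r i ∈ dih A j ↔ i ∈ A := Iff.rfl
@[simp] lemma sr_mem_dih {A : AddSubgroup (ZMod n)} {j k : ZMod n} :
    sr k ∈ dih A j ↔ k - j ∈ A := Iff.rfl

lemma dih_eq_dih {A : AddSubgroup (ZMod n)} {j j' : ZMod n} (h : j - j' ∈ A) :
    dih A j = dih A j' := by
  ext x
  cases x with
  | r i => rfl
  | sr k =>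
    simp only [sr_mem_dih]
    constructor
    · intro hk; have := A.add_mem hk h; convert this using 1; ring
    · intro hk; have := A.sub_mem hk h; convert this using 1; ring

/-- The rotation part of a subgroup of the dihedral group. -/
def rotPart (H : Subgroup (DihedralGroup n)) : AddSubgroup (ZMod n) where
  carrier := {i | r i ∈ H}
  zero_mem' := H.one_mem
  add_mem' := fun ha hb => by
    have := H.mul_mem ha hb; simpa using this
  neg_mem' := fun ha => by
    have := H.inv_mem ha; simpa using this

@[simp] lemma mem_rotPart {H : Subgroup (DihedralGroup n)} {i : ZMod n} :
    i ∈ rotPart H ↔ r i ∈ H := Iff.rfl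

@[simp] lemma rotPart_cyc (A : AddSubgroup (ZMod n)) : rotPart (cyc A) = A := rfl
@[simp] lemma rotPart_dih (A : AddSubgroup (ZMod n)) (j : ZMod n) : rotPart (dih A j) = A := rfl

lemma classify (H : Subgroup (DihedralGroup n)) :
    (H = cyc (rotPart H)) ∨ (∃ j, sr j ∈ H ∧ H = dih (rotPart H) j) := by
  by_cases h : ∃ j : ZMod n, sr j ∈ H
  · obtain ⟨j, hj⟩ := h
    right
    refine ⟨j, hj, ?_⟩
    ext x
    cases x with
    | r i => rfl
    | sr k =>
      simp only [sr_mem_dih, mem_rotPart]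
      constructor
      · intro hk
        have := H.mul_mem hj hk
        simpa using this
      · intro hk
        have := H.mul_mem hj hk
        simpa using this
  · left
    ext x
    cases x with
    | r i => rfl
    | sr k =>
      simp only [sr_not_mem_cyc, iff_false]
      exact fun hk => h ⟨k, hk⟩

/-- The map realizing the classification of subgroups of the dihedral group. -/
def F : (AddSubgroup (ZMod n)) ⊕ (Σ A : AddSubgroup (ZMod n), ZMod n ⧸ A) →
    Subgroup (DihedralGroup n)
  | Sum.inl A => cyc A
  | Sum.inr ⟨A, c⟩ => Quotient.liftOn' c (dih A) (fun j j' h => by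
      rw [QuotientAddGroup.leftRel_apply] at h
      exact dih_eq_dih (by rw [show j - j' = -(-j + j') by ring]; exact A.neg_mem h))

lemma F_bijective : Function.Bijective (F (n := n)) := by
  constructor
  · rintro (A | ⟨A, c⟩) (B | ⟨B, c'⟩) h
    · have h' : cyc A = cyc B := h
      rw [← rotPart_cyc A, ← rotPart_cyc B, h']
    · exfalso
      induction c' using Quotient.inductionOn' with
      | h j =>
        have h' : cyc A = dih B j := h
        have : sr j ∈ cyc A := by
          rw [h']; exact sr_mem_dih.mpr (by simpa using B.zero_mem)
        exact sr_not_mem_cyc this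
    · exfalso
      induction c using Quotient.inductionOn' with
      | h j =>
        have h' : dih A j = cyc B := h
        have : sr j ∈ cyc B := by
          rw [← h']; exact sr_mem_dih.mpr (by simpa using A.zero_mem)
        exact sr_not_mem_cyc this
    · induction c using Quotient.inductionOn' with
      | h j =>
        induction c' using Quotient.inductionOn' with
        | h j' =>
          have h' : dih A j = dih B j' := h
          have hAB : A = B := by rw [← rotPart_dih A j, ← rotPart_dih B j', h']
          subst hAB
          have hj : sr j ∈ dih A j' := by
            rw [← h']; exact sr_mem_dih.mpr (by simpa using A.zero_mem)
          rw [sr_mem_dih] at hj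
          refine congrArg _ (Sigma.ext rfl ?_)
          simp only [heq_eq_eq]
          apply Quotient.sound'
          rw [QuotientAddGroup.leftRel_apply]
          rw [show -j + j' = -(j - j') by ring]
          exact A.neg_mem hj
  · intro H
    rcases classify H with h | ⟨j, _, h⟩
    · exact ⟨Sum.inl (rotPart H), h.symm⟩
    · exact ⟨Sum.inr ⟨rotPart H, QuotientAddGroup.mk j⟩, h.symm⟩

section Divisors

variable (hn : 0 < n)
include hn

lemma card_zmultiples_coe {d : ℕ} (hd : d ∈ n.divisors) :
    Nat.card (zmultiples ((d : ℕ) : ZMod n)) = n / d := by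
  rw [Nat.card_zmultiples, ZMod.addOrderOf_coe d hn.ne',
    Nat.gcd_comm, Nat.gcd_eq_left (Nat.mem_divisors.mp hd).1]

lemma index_zmultiples_coe {d : ℕ} (hd : d ∈ n.divisors) :
    (zmultiples ((d : ℕ) : ZMod n)).index = d := by
  haveI : NeZero n := ⟨hn.ne'⟩
  obtain ⟨hdvd, -⟩ := Nat.mem_divisors.mp hd
  have hd0 : 0 < d := Nat.pos_of_dvd_of_pos hdvd hn
  have h1 := AddSubgroup.index_mul_card (zmultiples ((d : ℕ) : ZMod n))
  rw [card_zmultiples_coe hn hd, Nat.card_eq_fintype_card, ZMod.card] at h1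
  have h2 : 0 < n / d := Nat.div_pos (Nat.le_of_dvd hn hdvd) hd0
  have h3 : n / (n / d) = (zmultiples ((d : ℕ) : ZMod n)).index :=
    Nat.div_eq_of_eq_mul_left h2 h1.symm
  rw [← h3, Nat.div_div_self hdvd hn.ne']

lemma zmultiples_surj (A : AddSubgroup (ZMod n)) :
    ∃ d ∈ n.divisors, A = zmultiples ((d : ℕ) : ZMod n) := by
  haveI : NeZero n := ⟨hn.ne'⟩
  obtain ⟨g, hg⟩ := IsAddCyclic.exists_generator (α := A)
  have hA : A = zmultiples (g : ZMod n) := by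
    ext x
    constructor
    · intro hx
      obtain ⟨k, hk⟩ := hg ⟨x, hx⟩
      exact ⟨k, congrArg Subtype.val hk⟩
    · rintro ⟨k, rfl⟩
      exact A.zsmul_mem g.2 k
  set k := (g : ZMod n).val with hk
  have hgk : ((k : ℕ) : ZMod n) = (g : ZMod n) := ZMod.natCast_rightInverse _
  refine ⟨n.gcd k, Nat.mem_divisors.mpr ⟨Nat.gcd_dvd_left n k, hn.ne'⟩, ?_⟩
  rw [hA, ← hgk]
  apply le_antisymm
  · rw [zmultiples_le]
    refine ⟨(k / n.gcd k : ℕ), ?_⟩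
    have hdm : k / n.gcd k * n.gcd k = k := Nat.div_mul_cancel (Nat.gcd_dvd_right n k)
    calc ((k / n.gcd k : ℕ) : ℤ) • ((n.gcd k : ℕ) : ZMod n)
        = ((k / n.gcd k * n.gcd k : ℕ) : ZMod n) := by
          rw [natCast_zsmul, nsmul_eq_mul, Nat.cast_mul]
      _ = ((k : ℕ) : ZMod n) := by rw [hdm]
  · rw [zmultiples_le]
    refine ⟨Nat.gcdB n k, ?_⟩
    have hbez : (n.gcd k : ℤ) = n * Nat.gcdA n k + k * Nat.gcdB n k := Nat.gcd_eq_gcd_ab n k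
    have h2 : ((n.gcd k : ℕ) : ZMod n) = ((n * Nat.gcdA n k + k * Nat.gcdB n k : ℤ) : ZMod n) := by
      rw [← hbez, Int.cast_natCast]
    show (Nat.gcdB n k) • ((k : ℕ) : ZMod n) = ((n.gcd k : ℕ) : ZMod n)
    rw [zsmul_eq_mul, h2]
    push_cast
    rw [ZMod.natCast_self]
    ring

lemma zmultiples_inj {d₁ d₂ : ℕ} (h₁ : d₁ ∈ n.divisors) (h₂ : d₂ ∈ n.divisors)
    (h : zmultiples ((d₁ : ℕ) : ZMod n) = zmultiples ((d₂ : ℕ) : ZMod n)) : d₁ = d₂ := by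
  have := index_zmultiples_coe hn h₁
  rw [h, index_zmultiples_coe hn h₂] at this
  exact this.symm

/-- The divisors of `n` parametrize the subgroups of `ZMod n`. -/
noncomputable def divisorsEquiv : {d // d ∈ n.divisors} ≃ AddSubgroup (ZMod n) :=
  Equiv.ofBijective (fun d => zmultiples ((d.1 : ℕ) : ZMod n))
    ⟨fun d₁ d₂ h => Subtype.ext (zmultiples_inj hn d₁.2 d₂.2 h),
     fun A => by
      obtain ⟨d, hd, hA⟩ := zmultiples_surj hn A
      exact ⟨⟨d, hd⟩, hA.symm⟩⟩

end Divisors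

end DihedralCount

theorem card_subgroups_dihedral (n : ℕ) (hn : 0 < n) :
    Nat.card (Subgroup (DihedralGroup n)) = n.divisors.card + ∑ d ∈ n.divisors, d := by
  classical
  haveI : NeZero n := ⟨hn.ne'⟩
  open DihedralCount in
  rw [← Nat.card_congr (Equiv.ofBijective _ (F_bijective (n := n)))]
  rw [Nat.card_sum]
  congr 1
  · rw [← Nat.card_congr (divisorsEquiv hn), Nat.card_eq_finsetCard]
  · rw [← Nat.card_congr (Equiv.sigmaCongrLeft
      (β := fun A : AddSubgroup (ZMod n) => ZMod n ⧸ A) (divisorsEquiv hn))]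
    letI : ∀ d : {d // d ∈ n.divisors},
        Fintype (ZMod n ⧸ (divisorsEquiv hn d : AddSubgroup (ZMod n))) :=
      fun d => Fintype.ofFinite _
    rw [Nat.card_eq_fintype_card, Fintype.card_sigma]
    calc ∑ d : {d // d ∈ n.divisors},
          Fintype.card (ZMod n ⧸ (divisorsEquiv hn d : AddSubgroup (ZMod n)))
        = ∑ d : {d // d ∈ n.divisors}, (d : ℕ) := by
          refine Finset.sum_congr rfl fun d _ => ?_
          rw [← Nat.card_eq_fintype_card]
          exact index_zmultiples_coe hn d.2
      _ = ∑ d ∈ n.divisors, d := Finset.sum_coe_sort n.divisors (fun x => x)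
end

section
/- Let G be a group of the form Z_p ⋊ Z_{qⁿ} with p, q primes, q | p−1, and the action faithful of order q. Then sd(G) = ((2n+1)(2n+p+1)+2p(n+1))/(2n+p+1)², where the total number of subgroups of G is 2n+p+1 and the number of normal subgroups is 2n+1. -/
open scoped Pointwise

/-- In a finite cyclic group, a subgroup whose cardinality divides that of another
subgroup is contained in it. -/
lemma aux_le_of_card_dvd {X : Type*} [Group X] [Finite X] [IsCyclic X]
    {H K : Subgroup X} (h : Nat.card H ∣ Nat.card K) : H ≤ K := by
  classical
  letI := Fintype.ofFinite X
  have hd0 : 0 < Nat.card K := Nat.card_pos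
  have hfle : (Finset.univ.filter fun x : X => x ^ Nat.card K = 1).card ≤ Nat.card K :=
    IsCyclic.card_pow_eq_one_le hd0
  have hpow : ∀ (L : Subgroup X), ∀ x ∈ L, x ^ Nat.card L = 1 := by
    intro L x hx
    exact orderOf_dvd_iff_pow_eq_one.mp (Subgroup.orderOf_dvd_natCard L hx)
  have hKS : (K : Set X) ⊆ ↑(Finset.univ.filter fun x : X => x ^ Nat.card K = 1) := by
    intro x hx
    simp only [Finset.coe_filter, Set.mem_setOf_eq, Finset.mem_univ, true_and]
    exact hpow K x hx
  have hcard : Nat.card ↑((Finset.univ.filter fun x : X => x ^ Nat.card K = 1) : Set X)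
      ≤ Nat.card K := by
    rw [Nat.card_coe_set_eq, Set.ncard_coe_finset]
    exact hfle
  have hEq : (K : Set X) = ↑(Finset.univ.filter fun x : X => x ^ Nat.card K = 1) :=
    Set.Finite.eq_of_subset_of_card_le (Set.toFinite _) hKS hcard
  intro x hx
  obtain ⟨t, ht⟩ := h
  have hxd : x ^ Nat.card K = 1 := by
    rw [ht, pow_mul, hpow H x hx, one_pow]
  have hmem : x ∈ (K : Set X) := by
    rw [hEq]
    simp only [Finset.coe_filter, Set.mem_setOf_eq, Finset.mem_univ, true_and]
    exact hxd
  exact hmem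

/-- A finite cyclic group of order `q ^ k` has exactly `k + 1` subgroups. -/
lemma aux_card_subgroup_cyclic {X : Type*} [Group X] [Finite X] [IsCyclic X]
    {q k : ℕ} (hq : q.Prime) (hcard : Nat.card X = q ^ k) :
    Nat.card (Subgroup X) = k + 1 := by
  haveI : Fact q.Prime := ⟨hq⟩
  have hex : ∀ i : Fin (k + 1), ∃ H : Subgroup X, Nat.card H = q ^ (i : ℕ) := fun i =>
    Sylow.exists_subgroup_card_pow_prime q
      (by rw [hcard]; exact pow_dvd_pow q (Nat.lt_succ_iff.mp i.2))
  choose f hf using hex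
  have hinj : Function.Injective f := by
    intro i j hij
    have h1 : q ^ (i : ℕ) = q ^ (j : ℕ) := by rw [← hf i, ← hf j, hij]
    exact Fin.ext (Nat.pow_right_injective hq.two_le h1)
  have hsurj : Function.Surjective f := by
    intro H
    have hdvd : Nat.card H ∣ q ^ k := hcard ▸ Subgroup.card_subgroup_dvd_card H
    obtain ⟨i, hik, hHi⟩ := (Nat.dvd_prime_pow hq).mp hdvd
    refine ⟨⟨i, Nat.lt_succ_of_le hik⟩, ?_⟩
    have h1 : Nat.card (f ⟨i, Nat.lt_succ_of_le hik⟩) = Nat.card H := by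
      rw [hf, hHi]
    exact le_antisymm (aux_le_of_card_dvd (dvd_of_eq h1))
      (aux_le_of_card_dvd (dvd_of_eq h1.symm))
  have hb := Nat.card_eq_of_bijective f ⟨hinj, hsurj⟩
  simpa using hb.symm

/-- If two subgroups permute, the underlying set of their join is the product set. -/
lemma aux_permutes_coe_sup {G : Type*} [Group G] {H K : Subgroup G} (h : Permutes H K) :
    ((H ⊔ K : Subgroup G) : Set G) = (H : Set G) * (K : Set G) := by
  let J : Subgroup G :=
    { carrier := (H : Set G) * (K : Set G)
      one_mem' := ⟨1, one_mem H, 1, one_mem K, one_mul 1⟩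
      mul_mem' := by
        rintro a b ⟨h1, hh1, k1, hk1, rfl⟩ ⟨h2, hh2, k2, hk2, rfl⟩
        have hmid : k1 * h2 ∈ (H : Set G) * (K : Set G) := by
          rw [h]; exact ⟨k1, hk1, h2, hh2, rfl⟩
        obtain ⟨h3, hh3, k3, hk3, hk⟩ := hmid
        have hk' : h3 * k3 = k1 * h2 := hk
        refine ⟨h1 * h3, mul_mem hh1 hh3, k3 * k2, mul_mem hk3 hk2, ?_⟩
        calc h1 * h3 * (k3 * k2) = h1 * (h3 * k3) * k2 := by group
        _ = h1 * (k1 * h2) * k2 := by rw [hk']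
        _ = h1 * k1 * (h2 * k2) := by group
      inv_mem' := by
        rintro a ⟨h1, hh1, k1, hk1, rfl⟩
        have hm : k1⁻¹ * h1⁻¹ ∈ (K : Set G) * (H : Set G) :=
          ⟨k1⁻¹, inv_mem hk1, h1⁻¹, inv_mem hh1, rfl⟩
        rw [← h] at hm
        simpa [mul_inv_rev] using hm }
  have hHJ : H ≤ J := fun x hx => ⟨x, hx, 1, one_mem K, mul_one x⟩
  have hKJ : K ≤ J := fun x hx => ⟨1, one_mem H, x, hx, one_mul x⟩
  have hJle : (J : Set G) ⊆ ((H ⊔ K : Subgroup G) : Set G) := by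
    rintro x ⟨a, ha, b, hb, rfl⟩
    exact mul_mem (Subgroup.mem_sup_left ha) (Subgroup.mem_sup_right hb)
  have hsupJ : H ⊔ K ≤ J := sup_le hHJ hKJ
  exact le_antisymm (fun x hx => hsupJ hx) hJle

set_option maxHeartbeats 1000000 in
theorem sd_semidirect_Zp_Zqn (G : Type*) [Group G] [Fintype G] (p q n : ℕ)
    (hp : p.Prime) (hq : q.Prime) (hn : 1 ≤ n) (hdvd : q ∣ p - 1)
    (N P : Subgroup G) (hN : N.Normal) (hNcard : Nat.card N = p) (hPcard : Nat.card P = q ^ n)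
    (hNcyc : IsCyclic N) (hPcyc : IsCyclic P)
    (hinf : N ⊓ P = ⊥) (hsup : N ⊔ P = ⊤)
    (hker : Nat.card ↥(P ⊓ Subgroup.centralizer (N : Set G)) = q ^ (n - 1)) :
    Nat.card (Subgroup G) = 2 * n + p + 1 ∧
    Nat.card {H : Subgroup G // H.Normal} = 2 * n + 1 ∧
    sd G = ((2 * (n : ℚ) + 1) * (2 * n + p + 1) + 2 * p * (n + 1)) / (2 * n + p + 1) ^ 2 := by
  classical
  obtain ⟨k, rfl⟩ : ∃ k, n = k + 1 := ⟨n - 1, by omega⟩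
  haveI := hN
  haveI := hNcyc
  haveI := hPcyc
  haveI : Fact p.Prime := ⟨hp⟩
  haveI : Fact q.Prime := ⟨hq⟩
  haveI : Finite (Subgroup G) :=
    Finite.of_injective (fun H : Subgroup G => (H : Set G)) SetLike.coe_injective
  haveI : Finite (Sylow q G) :=
    Finite.of_injective (fun Q : Sylow q G => (Q : Subgroup G))
      (fun a b hab => Sylow.ext hab)
  have hp2 := hp.two_le
  have hq2 := hq.two_le
  have hqp : q < p := lt_of_le_of_lt (Nat.le_of_dvd (by omega) hdvd) (by omega)
  have hqnep : q ≠ p := ne_of_lt hqp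
  have hker' : Nat.card ↥(P ⊓ Subgroup.centralizer (N : Set G)) = q ^ k := by
    simpa using hker
  -- cardinality of G
  have hcompl : N.IsComplement' P :=
    Subgroup.isComplement'_of_disjoint_and_mul_eq_univ (disjoint_iff.mpr hinf)
      (by rw [← Subgroup.normal_mul, hsup, Subgroup.coe_top])
  have hG : Nat.card G = p * q ^ (k + 1) := by
    rw [← hcompl.card_mul_card]
    exact congrArg₂ (fun a b => a * b) hNcard hPcard
  have hqn0 : (0 : ℕ) < q ^ (k + 1) := by positivity
  have hnotqp : ¬ q ∣ p := fun hc => hqnep ((Nat.prime_dvd_prime_iff_eq hq hp).mp hc)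
  have hfq : (Nat.card G).factorization q = k + 1 := by
    rw [hG, Nat.factorization_mul hp.pos.ne' (by positivity), Finsupp.add_apply,
      hq.factorization_pow, Finsupp.single_eq_same,
      Nat.factorization_eq_zero_of_not_dvd hnotqp, zero_add]
  have hfp : (Nat.card G).factorization p = 1 := by
    rw [hG, Nat.factorization_mul hp.pos.ne' (by positivity), Finsupp.add_apply,
      hq.factorization_pow, Finsupp.single_apply, if_neg hqnep,
      Nat.Prime.factorization_self hp, add_zero]
  -- Sylow q subgroups have cardinality q ^ (k+1)
  have hQcard : ∀ Q : Sylow q G, Nat.card (Q : Subgroup G) = q ^ (k + 1) := by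
    intro Q
    rw [Q.card_eq_multiplicity, hfq]
  -- P is a Sylow q-subgroup
  obtain ⟨Psy, hPsy⟩ := (IsPGroup.of_card hPcard).exists_le_sylow
  have hPS : (Psy : Subgroup G) = P :=
    (Subgroup.eq_of_le_of_card_ge hPsy (by rw [hQcard, hPcard])).symm
  -- N is the unique subgroup of order p
  obtain ⟨Nsy, hNsy⟩ := (IsPGroup.of_card (p := p) (n := 1)
    (by rw [hNcard, pow_one])).exists_le_sylow
  have hNScard : Nat.card (Nsy : Subgroup G) = p := by
    rw [Nsy.card_eq_multiplicity, hfp, pow_one]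
  have hNS : (Nsy : Subgroup G) = N :=
    (Subgroup.eq_of_le_of_card_ge hNsy (by rw [hNScard, hNcard])).symm
  have hpsub : ∀ H : Subgroup G, Nat.card H = p → H = N := by
    intro H hH
    obtain ⟨Q, hQ⟩ := (IsPGroup.of_card (p := p) (n := 1)
      (by rw [hH, pow_one])).exists_le_sylow
    obtain ⟨g, hg⟩ := MulAction.exists_smul_eq G Q Nsy
    have hco : MulAut.conj g • (Q : Subgroup G) = N := by
      rw [← Sylow.coe_subgroup_smul, hg, hNS]
    have hQN : (Q : Subgroup G) = N := by
      have h1 : (Q : Subgroup G) = (MulAut.conj g)⁻¹ • (MulAut.conj g • (Q : Subgroup G)) := by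
        rw [inv_smul_smul]
      rw [h1, hco, ← map_inv MulAut.conj g, Subgroup.Normal.conj_smul_eq_self]
    have hle : H ≤ N := hQN ▸ hQ
    exact Subgroup.eq_of_le_of_card_ge hle (by rw [hH, hNcard])
  have hNle : ∀ H : Subgroup G, p ∣ Nat.card H → N ≤ H := by
    intro H hdv
    obtain ⟨x, hx⟩ := exists_prime_orderOf_dvd_card' (G := ↥H) p hdv
    have hy : orderOf ((x : G)) = p := by rw [Subgroup.orderOf_coe]; exact hx
    have hzle : Subgroup.zpowers (x : G) ≤ H := by
      rw [Subgroup.zpowers_le]; exact x.2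
    have hzcard : Nat.card (Subgroup.zpowers (x : G)) = p := by
      rw [Nat.card_zpowers, hy]
    have hzn := hpsub _ hzcard
    rw [← hzn]; exact hzle
  -- the central subgroup C
  set C : Subgroup G := P ⊓ Subgroup.centralizer (N : Set G) with hCdef
  have hCcard : Nat.card C = q ^ k := hker'
  have hCleP : C ≤ P := inf_le_left
  have hPcomm : ∀ x ∈ P, ∀ y ∈ P, x * y = y * x := by
    intro x hx y hy
    letI : CommGroup ↥P := IsCyclic.commGroup
    have h1 : (⟨x, hx⟩ : P) * ⟨y, hy⟩ = ⟨y, hy⟩ * ⟨x, hx⟩ := mul_comm _ _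
    simpa using congrArg Subtype.val h1
  have hCcent : C ≤ Subgroup.center G := by
    intro c hc
    rw [Subgroup.mem_center_iff]
    intro g
    have hg : g ∈ N ⊔ P := by rw [hsup]; trivial
    have h1 : N ⊔ P ≤ Subgroup.centralizer {c} := by
      refine sup_le ?_ ?_
      · intro m hm
        rw [Subgroup.mem_centralizer_iff]
        intro h hh
        rw [Set.mem_singleton_iff] at hh
        rw [hh]
        exact (Subgroup.mem_centralizer_iff.mp hc.2 m hm).symm
      · intro y hy
        rw [Subgroup.mem_centralizer_iff]
        intro h hh
        rw [Set.mem_singleton_iff] at hh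
        rw [hh]
        exact hPcomm c hc.1 y hy
    have h2 := Subgroup.mem_centralizer_iff.mp (h1 hg) c (Set.mem_singleton c)
    exact h2.symm
  have hCnormal : C.Normal := by
    constructor
    intro c hc g
    have h1 : g * c = c * g := Subgroup.mem_center_iff.mp (hCcent hc) g
    have h2 : g * c * g⁻¹ = c := by rw [h1, mul_assoc, mul_inv_cancel, mul_one]
    rwa [h2]
  haveI := hCnormal
  -- C is contained in every Sylow q-subgroup
  have hCQ : ∀ Q : Sylow q G, C ≤ (Q : Subgroup G) := by
    intro Q
    obtain ⟨g, hg⟩ := MulAction.exists_smul_eq G Psy Q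
    have hQP : (Q : Subgroup G) = MulAut.conj g • P := by
      rw [← hg, Sylow.coe_subgroup_smul, hPS]
    rw [hQP]
    calc C = MulAut.conj g • C := (Subgroup.Normal.conj_smul_eq_self g C).symm
    _ ≤ MulAut.conj g • P := by
        rw [Subgroup.pointwise_smul_def, Subgroup.pointwise_smul_def]
        exact Subgroup.map_mono hCleP
  -- Sylow q-subgroups are cyclic
  have hQcyc : ∀ Q : Sylow q G, IsCyclic ↥(Q : Subgroup G) := by
    intro Q
    obtain ⟨g, hg⟩ := MulAction.exists_smul_eq G Psy Q
    have hQP : (Q : Subgroup G) = Subgroup.map (MulAut.conj g).toMonoidHom P := by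
      rw [← hg, Sylow.coe_subgroup_smul, hPS, Subgroup.pointwise_smul_def]
      rfl
    rw [hQP]
    exact isCyclic_of_surjective _ (((MulAut.conj g).toMonoidHom).subgroupMap_surjective P)
  -- classification of subgroups
  have hdvdqn : ∀ H : Subgroup G, ¬ N ≤ H → Nat.card H ∣ q ^ (k + 1) := by
    intro H hnle
    have hpn : ¬ p ∣ Nat.card H := fun hc => hnle (hNle H hc)
    have h1 : Nat.card H ∣ p * q ^ (k + 1) := hG ▸ Subgroup.card_subgroup_dvd_card H
    exact ((Nat.Prime.coprime_iff_not_dvd hp).mpr hpn).symm.dvd_of_dvd_mul_left h1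
  have hcases : ∀ H : Subgroup G,
      N ≤ H ∨ H ≤ C ∨ ∃ Q : Sylow q G, (Q : Subgroup G) = H := by
    intro H
    by_cases hnle : N ≤ H
    · exact Or.inl hnle
    right
    obtain ⟨i, hik, hHi⟩ := (Nat.dvd_prime_pow hq).mp (hdvdqn H hnle)
    obtain ⟨Q, hHQ⟩ := (IsPGroup.of_card hHi).exists_le_sylow
    by_cases hin : i = k + 1
    · refine Or.inr ⟨Q, ?_⟩
      exact (Subgroup.eq_of_le_of_card_ge hHQ (by rw [hQcard, hHi, hin])).symm
    · left
      have hik' : i ≤ k := by omega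
      haveI := hQcyc Q
      have hCQ' := hCQ Q
      have hcardHsub : Nat.card (H.subgroupOf (Q : Subgroup G)) = q ^ i := by
        rw [Nat.card_congr (Subgroup.subgroupOfEquivOfLe hHQ).toEquiv, hHi]
      have hcardCsub : Nat.card (C.subgroupOf (Q : Subgroup G)) = q ^ k := by
        rw [Nat.card_congr (Subgroup.subgroupOfEquivOfLe hCQ').toEquiv, hCcard]
      have hle : H.subgroupOf (Q : Subgroup G) ≤ C.subgroupOf (Q : Subgroup G) := by
        apply aux_le_of_card_dvd
        rw [hcardHsub, hcardCsub]
        exact pow_dvd_pow q hik'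
      intro x hx
      have hxQ : x ∈ (Q : Subgroup G) := hHQ hx
      have hxm : (⟨x, hxQ⟩ : (Q : Subgroup G)) ∈ H.subgroupOf (Q : Subgroup G) := hx
      exact hle hxm
  -- P is not normal
  have hPnn : ¬ P.Normal := by
    intro hPn
    have hPcent : P ≤ Subgroup.centralizer (N : Set G) := by
      intro x hx
      rw [Subgroup.mem_centralizer_iff]
      intro m hm
      have h1 : m * x * m⁻¹ * x⁻¹ ∈ P := mul_mem (hPn.conj_mem x hx m) (inv_mem hx)
      have h2 : m * x * m⁻¹ * x⁻¹ ∈ N := by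
        have h3 := hN.conj_mem m⁻¹ (inv_mem hm) x
        have h4 : m * (x * m⁻¹ * x⁻¹) ∈ N := mul_mem hm (by simpa [mul_assoc] using h3)
        simpa [mul_assoc] using h4
      have h5 : m * x * m⁻¹ * x⁻¹ ∈ N ⊓ P := ⟨h2, h1⟩
      rw [hinf, Subgroup.mem_bot] at h5
      have h6 : m * x = x * m := by
        have h7 := congrArg (fun z => z * x * m) h5
        simp only [one_mul] at h7
        calc m * x = m * x * m⁻¹ * x⁻¹ * x * m := by group
        _ = x * m := by rw [h5]; group
      exact h6
    have hCP : C = P := by rw [hCdef, inf_eq_left.mpr hPcent]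
    rw [hCP, hPcard] at hCcard
    have := Nat.pow_right_injective hq.two_le hCcard
    omega
  -- the normalizer of P is P
  have hnorm : Subgroup.normalizer (P : Set G) = P := by
    have hle : P ≤ Subgroup.normalizer (P : Set G) := Subgroup.le_normalizer
    obtain ⟨t, ht⟩ := Subgroup.card_dvd_of_le hle
    rw [hPcard] at ht
    have h2 : Nat.card (Subgroup.normalizer (P : Set G)) ∣ q ^ (k + 1) * p := by
      rw [mul_comm]; exact hG ▸ Subgroup.card_subgroup_dvd_card _
    have htp : t ∣ p := (Nat.mul_dvd_mul_iff_left hqn0).mp (ht ▸ h2)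
    rcases (Nat.Prime.eq_one_or_self_of_dvd hp t htp) with rfl | rfl
    · exact (Subgroup.eq_of_le_of_card_ge hle (by rw [ht, hPcard, mul_one])).symm
    · exfalso
      apply hPnn
      have h8 : Subgroup.normalizer (P : Set G) = ⊤ :=
        Subgroup.eq_top_of_card_eq _ (by rw [ht, hG]; ring)
      exact Subgroup.normalizer_eq_top_iff.mp h8
  -- there are p Sylow q-subgroups
  have hSylcard : Nat.card (Sylow q G) = p := by
    have h1 : Nat.card (Sylow q G) =
        Nat.card (G ⧸ Subgroup.normalizer ((Psy : Subgroup G) : Set G)) :=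
      Psy.card_eq_card_quotient_normalizer
    rw [hPS, hnorm] at h1
    have h2 := Subgroup.card_mul_index P
    rw [hPcard, hG] at h2
    have h3 : P.index = p := by
      apply Nat.eq_of_mul_eq_mul_left hqn0
      rw [h2]; ring
    rw [h1, ← Subgroup.index_eq_card, h3]
  -- Sylow q-subgroups are not normal
  have hSylnn : ∀ Q : Sylow q G, ¬ (Q : Subgroup G).Normal := by
    intro Q hQn
    haveI := hQn
    have huniq : ∀ Q' : Sylow q G, Q' = Q := by
      intro Q'
      obtain ⟨g, hg⟩ := MulAction.exists_smul_eq G Q Q'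
      rw [← hg, Sylow.smul_eq_of_normal]
    have h1 : Nat.card (Sylow q G) = 1 := by
      rw [Nat.card_eq_one_iff_unique]
      exact ⟨⟨fun a b => (huniq a).trans (huniq b).symm⟩, ⟨Q⟩⟩
    rw [hSylcard] at h1
    omega
  -- subgroups containing N are normal
  have hmapP : Subgroup.map (QuotientGroup.mk' N) P = ⊤ := by
    have h1 : Subgroup.map (QuotientGroup.mk' N) (N ⊔ P) = ⊤ := by
      rw [hsup]
      exact Subgroup.map_top_of_surjective _ (QuotientGroup.mk'_surjective N)
    have hmapN : Subgroup.map (QuotientGroup.mk' N) N = ⊥ := by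
      rw [Subgroup.map_eq_bot_iff, QuotientGroup.ker_mk']
    rwa [Subgroup.map_sup, hmapN, bot_sup_eq] at h1
  have hquotsurj : ∀ a : G ⧸ N, ∃ x ∈ P, QuotientGroup.mk' N x = a := by
    intro a
    have h1 : a ∈ Subgroup.map (QuotientGroup.mk' N) P := by rw [hmapP]; trivial
    simpa [Subgroup.mem_map] using h1
  have hquotcomm : ∀ a b : G ⧸ N, a * b = b * a := by
    intro a b
    obtain ⟨x, hx, rfl⟩ := hquotsurj a
    obtain ⟨y, hy, rfl⟩ := hquotsurj b
    rw [← map_mul, ← map_mul, hPcomm x hx y hy]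
  have hA_normal : ∀ H : Subgroup G, N ≤ H → H.Normal := by
    intro H hNH
    have hmn : (Subgroup.map (QuotientGroup.mk' N) H).Normal := by
      constructor
      intro m hm g
      rw [hquotcomm g m, mul_assoc, mul_inv_cancel, mul_one]
      exact hm
    have hHeq : Subgroup.comap (QuotientGroup.mk' N)
        (Subgroup.map (QuotientGroup.mk' N) H) = H := by
      rw [Subgroup.comap_map_eq, QuotientGroup.ker_mk', sup_of_le_left hNH]
    rw [← hHeq]
    exact hmn.comap _
  have hB_normal : ∀ H : Subgroup G, H ≤ C → H.Normal := by
    intro H hHC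
    constructor
    intro c hc g
    have h1 : g * c = c * g := Subgroup.mem_center_iff.mp (hCcent (hHC hc)) g
    have h2 : g * c * g⁻¹ = c := by rw [h1, mul_assoc, mul_inv_cancel, mul_one]
    rwa [h2]
  -- disjointness of the three classes
  have hAB : ∀ H : Subgroup G, N ≤ H → H ≤ C → False := by
    intro H h1 h2
    have h3 : Nat.card N ∣ Nat.card C := Subgroup.card_dvd_of_le (le_trans h1 h2)
    rw [hNcard, hCcard] at h3
    exact hqnep (((Nat.prime_dvd_prime_iff_eq hp hq).mp (hp.dvd_of_dvd_pow h3))).symm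
  have hAS : ∀ Q : Sylow q G, N ≤ (Q : Subgroup G) → False := by
    intro Q h1
    have h3 : Nat.card N ∣ Nat.card (Q : Subgroup G) := Subgroup.card_dvd_of_le h1
    rw [hNcard, hQcard] at h3
    exact hqnep (((Nat.prime_dvd_prime_iff_eq hp hq).mp (hp.dvd_of_dvd_pow h3))).symm
  have hBS : ∀ Q : Sylow q G, (Q : Subgroup G) ≤ C → False := by
    intro Q h1
    have h3 : Nat.card (Q : Subgroup G) ∣ Nat.card C := Subgroup.card_dvd_of_le h1
    rw [hQcard, hCcard] at h3
    have h4 := (Nat.pow_dvd_pow_iff_le_right hq.one_lt).mp h3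
    omega
  -- cyclic structure of G⧸N and C
  have hGNcyc : IsCyclic (G ⧸ N) := by
    apply isCyclic_of_surjective ((QuotientGroup.mk' N).comp P.subtype)
    apply MonoidHom.range_eq_top.mp
    rw [MonoidHom.range_comp, Subgroup.range_subtype]
    exact hmapP
  have hGNcard : Nat.card (G ⧸ N) = q ^ (k + 1) := by
    have h1 := Subgroup.card_eq_card_quotient_mul_card_subgroup N
    rw [hG, hNcard] at h1
    apply Nat.eq_of_mul_eq_mul_right hp.pos
    rw [← h1]; ring
  haveI := hGNcyc
  haveI : IsCyclic ↥C := Subgroup.isCyclic_of_le hCleP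
  have hcardSubGN : Nat.card (Subgroup (G ⧸ N)) = k + 2 :=
    aux_card_subgroup_cyclic hq hGNcard
  have hcardSubC : Nat.card (Subgroup ↥C) = k + 1 :=
    aux_card_subgroup_cyclic hq hCcard
  -- the bijection counting all subgroups
  have hcomapN : ∀ K : Subgroup (G ⧸ N), N ≤ Subgroup.comap (QuotientGroup.mk' N) K := by
    intro K x hx
    rw [Subgroup.mem_comap]
    have h1 : (QuotientGroup.mk' N) x = 1 := by
      rw [← MonoidHom.mem_ker, QuotientGroup.ker_mk']; exact hx
    rw [h1]; exact K.one_mem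
  set Φ : Subgroup (G ⧸ N) ⊕ (Subgroup ↥C ⊕ Sylow q G) → Subgroup G := fun x =>
    match x with
    | Sum.inl K => Subgroup.comap (QuotientGroup.mk' N) K
    | Sum.inr (Sum.inl K) => Subgroup.map C.subtype K
    | Sum.inr (Sum.inr Q) => (Q : Subgroup G) with hΦdef
  have hΦbij : Function.Bijective Φ := by
    constructor
    · rintro (K1 | K1 | Q1) (K2 | K2 | Q2) h <;> simp only [hΦdef] at h
      · rw [Subgroup.comap_injective (QuotientGroup.mk'_surjective N) h]
      · exact absurd h (by
          intro h
          exact hAB _ (hcomapN K1) (h ▸ Subgroup.map_subtype_le K2))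
      · exact absurd h (by
          intro h
          exact hAS Q2 (h ▸ hcomapN K1))
      · exact absurd h (by
          intro h
          exact hAB _ (hcomapN K2) (h.symm ▸ Subgroup.map_subtype_le K1))
      · rw [Subgroup.map_injective C.subtype_injective h]
      · exact absurd h (by
          intro h
          exact hBS Q2 (h ▸ Subgroup.map_subtype_le K1))
      · exact absurd h (by
          intro h
          exact hAS Q1 (h.symm ▸ hcomapN K2))
      · exact absurd h (by
          intro h
          exact hBS Q1 (h.symm ▸ Subgroup.map_subtype_le K2))
      · rw [Sylow.ext h]
    · intro H
      rcases hcases H with hA | hB | ⟨Q, hQ⟩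
      · refine ⟨Sum.inl (Subgroup.map (QuotientGroup.mk' N) H), ?_⟩
        simp only [hΦdef]
        rw [Subgroup.comap_map_eq, QuotientGroup.ker_mk', sup_of_le_left hA]
      · refine ⟨Sum.inr (Sum.inl (H.subgroupOf C)), ?_⟩
        simp only [hΦdef]
        rw [Subgroup.subgroupOf_map_subtype, inf_eq_left.mpr hB]
      · exact ⟨Sum.inr (Sum.inr Q), hQ⟩
  have hTotal : Nat.card (Subgroup G) = 2 * (k + 1) + p + 1 := by
    have h1 := Nat.card_eq_of_bijective Φ hΦbij
    rw [← h1, Nat.card_sum, Nat.card_sum, hcardSubGN, hcardSubC, hSylcard]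
    omega
  -- counting normal subgroups
  have hNormalCard : Nat.card {H : Subgroup G // H.Normal} = 2 * (k + 1) + 1 := by
    set Ψ : Subgroup (G ⧸ N) ⊕ Subgroup ↥C → {H : Subgroup G // H.Normal} := fun x =>
      match x with
      | Sum.inl K => ⟨Subgroup.comap (QuotientGroup.mk' N) K, hA_normal _ (hcomapN K)⟩
      | Sum.inr K => ⟨Subgroup.map C.subtype K, hB_normal _ (Subgroup.map_subtype_le K)⟩
      with hΨdef
    have hΨbij : Function.Bijective Ψ := by
      constructor
      · rintro (K1 | K1) (K2 | K2) h <;>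
          simp only [hΨdef, Subtype.mk.injEq] at h
        · rw [Subgroup.comap_injective (QuotientGroup.mk'_surjective N) h]
        · exact absurd h (by
            intro h
            exact hAB _ (hcomapN K1) (h ▸ Subgroup.map_subtype_le K2))
        · exact absurd h (by
            intro h
            exact hAB _ (hcomapN K2) (h.symm ▸ Subgroup.map_subtype_le K1))
        · rw [Subgroup.map_injective C.subtype_injective h]
      · rintro ⟨H, hHn⟩
        rcases hcases H with hA | hB | ⟨Q, hQ⟩
        · refine ⟨Sum.inl (Subgroup.map (QuotientGroup.mk' N) H), ?_⟩
          simp only [hΨdef, Subtype.mk.injEq]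
          rw [Subgroup.comap_map_eq, QuotientGroup.ker_mk', sup_of_le_left hA]
        · refine ⟨Sum.inr (H.subgroupOf C), ?_⟩
          simp only [hΨdef, Subtype.mk.injEq]
          rw [Subgroup.subgroupOf_map_subtype, inf_eq_left.mpr hB]
        · exact absurd (hQ ▸ hHn) (hSylnn Q)
    have h1 := Nat.card_eq_of_bijective Ψ hΨbij
    rw [← h1, Nat.card_sum, hcardSubGN, hcardSubC]
    omega
  -- distinct Sylow q-subgroups do not permute
  have hnoperm : ∀ Q1 Q2 : Sylow q G, Q1 ≠ Q2 →
      ¬ Permutes (Q1 : Subgroup G) (Q2 : Subgroup G) := by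
    intro Q1 Q2 hne hperm
    set J : Subgroup G := (Q1 : Subgroup G) ⊔ (Q2 : Subgroup G) with hJ
    have hJset := aux_permutes_coe_sup hperm
    obtain ⟨t, ht⟩ := hQcard Q1 ▸
      Subgroup.card_dvd_of_le (le_sup_left : (Q1 : Subgroup G) ≤ J)
    have h2 : Nat.card J ∣ q ^ (k + 1) * p := by
      rw [mul_comm]; exact hG ▸ Subgroup.card_subgroup_dvd_card J
    have htp : t ∣ p := (Nat.mul_dvd_mul_iff_left hqn0).mp (ht ▸ h2)
    rcases Nat.Prime.eq_one_or_self_of_dvd hp t htp with ht1 | ht1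
    · -- J = Q1, so Q2 ≤ Q1, contradiction
      rw [ht1, mul_one] at ht
      have hJQ1 : (Q1 : Subgroup G) = J :=
        Subgroup.eq_of_le_of_card_ge le_sup_left (by rw [ht, hQcard])
      have hQ2le : (Q2 : Subgroup G) ≤ (Q1 : Subgroup G) := hJQ1 ▸ le_sup_right
      have hQeq : (Q2 : Subgroup G) = (Q1 : Subgroup G) :=
        Subgroup.eq_of_le_of_card_ge hQ2le (by rw [hQcard, hQcard])
      exact hne (Sylow.ext hQeq.symm)
    · -- |J| = q^(k+1) * p, derive a contradiction by counting
      rw [ht1] at ht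
      have hdecomp : ∀ x : ↥J,
          ∃ ab : ↥(Q1 : Subgroup G) × ↥(Q2 : Subgroup G), (ab.1 : G) * ab.2 = x := by
        intro x
        have hx : (x : G) ∈ ((Q1 : Subgroup G) : Set G) * ((Q2 : Subgroup G) : Set G) := by
          rw [← hJset]; exact x.2
        obtain ⟨a, ha, b, hb, hab⟩ := hx
        exact ⟨(⟨a, ha⟩, ⟨b, hb⟩), hab⟩
      choose f hf using hdecomp
      set F : ↥J × ↥C → ↥(Q1 : Subgroup G) × ↥(Q2 : Subgroup G) := fun z =>
        ((f z.1).1 * ⟨(z.2 : G), hCQ Q1 z.2.2⟩,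
          ⟨(z.2 : G)⁻¹, inv_mem (hCQ Q2 z.2.2)⟩ * (f z.1).2) with hFdef
      have hFinj : Function.Injective F := by
        rintro ⟨x, c⟩ ⟨y, d⟩ hxy
        simp only [hFdef, Prod.mk.injEq] at hxy
        obtain ⟨hxy1, hxy2⟩ := hxy
        have h1 : ((f x).1 : G) * c = ((f y).1 : G) * d := by
          simpa using congrArg Subtype.val hxy1
        have h2 : (c : G)⁻¹ * ((f x).2 : G) = (d : G)⁻¹ * ((f y).2 : G) := by
          simpa using congrArg Subtype.val hxy2
        have hx' : (x : G) = ((f x).1 : G) * ((f x).2 : G) := (hf x).symm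
        have hy' : (y : G) = ((f y).1 : G) * ((f y).2 : G) := (hf y).symm
        have hxy' : (x : G) = (y : G) := by
          calc (x : G) = (((f x).1 : G) * c) * ((c : G)⁻¹ * ((f x).2 : G)) := by
                rw [hx']; group
          _ = (((f y).1 : G) * d) * ((d : G)⁻¹ * ((f y).2 : G)) := by rw [h1, h2]
          _ = (y : G) := by rw [hy']; group
        have hxyeq : x = y := Subtype.ext hxy'
        subst hxyeq
        have hcd : (c : G) = d := by
          have := mul_left_cancel h1
          exact this
        exact Prod.ext rfl (Subtype.ext hcd)
      have hcard_le := Nat.card_le_card_of_injective F hFinj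
      rw [Nat.card_prod, Nat.card_prod, hQcard, hQcard, hCcard, ht] at hcard_le
      have h3 : p * q ^ (k + 1 + k) ≤ q * q ^ (k + 1 + k) := by
        calc p * q ^ (k + 1 + k) = q ^ (k + 1) * p * q ^ k := by ring
        _ ≤ q ^ (k + 1) * q ^ (k + 1) := hcard_le
        _ = q * q ^ (k + 1 + k) := by ring
      have h4 : p ≤ q := Nat.le_of_mul_le_mul_right h3 (by positivity)
      omega
  -- pairs with a normal component permute
  have hpermL : ∀ H K : Subgroup G, H.Normal → Permutes H K := by
    intro H K hHn
    haveI := hHn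
    show (H : Set G) * K = (K : Set G) * H
    rw [← Subgroup.normal_mul H K, ← Subgroup.mul_normal K H, sup_comm H K]
  -- characterization of non-permuting pairs
  have hnp_iff : ∀ x : Subgroup G × Subgroup G, ¬ Permutes x.1 x.2 ↔
      ∃ y : Sylow q G × Sylow q G, ¬ y.1 = y.2 ∧
        ((y.1 : Subgroup G), (y.2 : Subgroup G)) = x := by
    rintro ⟨H, K⟩
    constructor
    · intro hnp
      have hHn : ¬ H.Normal := fun h => hnp (hpermL H K h)
      have hKn : ¬ K.Normal := fun h => hnp (hpermL K H h).symm
      obtain ⟨Q1, hQ1⟩ : ∃ Q : Sylow q G, (Q : Subgroup G) = H := by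
        rcases hcases H with hA | hB | hS
        · exact absurd (hA_normal H hA) hHn
        · exact absurd (hB_normal H hB) hHn
        · exact hS
      obtain ⟨Q2, hQ2⟩ : ∃ Q : Sylow q G, (Q : Subgroup G) = K := by
        rcases hcases K with hA | hB | hS
        · exact absurd (hA_normal K hA) hKn
        · exact absurd (hB_normal K hB) hKn
        · exact hS
      have hne : ¬ Q1 = Q2 := by
        rintro rfl
        rw [← hQ1, ← hQ2] at hnp
        exact hnp rfl
      exact ⟨(Q1, Q2), hne, by rw [hQ1, hQ2]⟩
    · rintro ⟨⟨Q1, Q2⟩, hne, heq⟩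
      obtain ⟨h1, h2⟩ := Prod.mk.injEq .. ▸ heq
      rw [← h1, ← h2]
      exact hnoperm Q1 Q2 hne
  -- count the non-permuting pairs
  have hNPcard : Nat.card {x : Subgroup G × Subgroup G // ¬ Permutes x.1 x.2} + p = p * p := by
    have e : {y : Sylow q G × Sylow q G // ¬ y.1 = y.2} ≃
        {x : Subgroup G × Subgroup G // ¬ Permutes x.1 x.2} := by
      refine Equiv.ofBijective
        (fun y => ⟨((y.1.1 : Subgroup G), (y.1.2 : Subgroup G)),
          (hnp_iff _).mpr ⟨y.1, y.2, rfl⟩⟩) ⟨?_, ?_⟩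
      · rintro ⟨⟨a, b⟩, hab⟩ ⟨⟨c, d⟩, hcd⟩ h
        simp only [Subtype.mk.injEq, Prod.mk.injEq] at h
        exact Subtype.ext (Prod.ext (Sylow.ext h.1) (Sylow.ext h.2))
      · rintro ⟨x, hx⟩
        obtain ⟨y, hne, heq⟩ := (hnp_iff x).mp hx
        exact ⟨⟨y, hne⟩, Subtype.ext heq⟩
    have hsum : Nat.card {y : Sylow q G × Sylow q G // y.1 = y.2} +
        Nat.card {y : Sylow q G × Sylow q G // ¬ y.1 = y.2} = p * p := by
      rw [← Nat.card_sum, Nat.card_congr (Equiv.sumCompl _), Nat.card_prod, hSylcard]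
    have hdiag : Nat.card {y : Sylow q G × Sylow q G // y.1 = y.2} = p := by
      rw [← hSylcard]
      apply Nat.card_congr
      refine ⟨fun y => y.1.1, fun Q => ⟨(Q, Q), rfl⟩, ?_, fun Q => rfl⟩
      rintro ⟨⟨a, b⟩, h⟩
      exact Subtype.ext (Prod.ext rfl h)
    rw [← Nat.card_congr e]
    omega
  -- count the permuting pairs
  have hsplit : Nat.card {x : Subgroup G × Subgroup G // Permutes x.1 x.2} +
      Nat.card {x : Subgroup G × Subgroup G // ¬ Permutes x.1 x.2} =
        (2 * (k + 1) + p + 1) * (2 * (k + 1) + p + 1) := by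
    rw [← Nat.card_sum, Nat.card_congr (Equiv.sumCompl fun x : Subgroup G × Subgroup G =>
      Permutes x.1 x.2), Nat.card_prod, hTotal]
  have hPermCard : Nat.card {x : Subgroup G × Subgroup G // Permutes x.1 x.2} =
      (2 * (k + 1) + 1) * (2 * (k + 1) + p + 1) + 2 * p * ((k + 1) + 1) := by
    have hid : ((2 * (k + 1) + 1) * (2 * (k + 1) + p + 1) + 2 * p * ((k + 1) + 1)) + p * p =
        (2 * (k + 1) + p + 1) * (2 * (k + 1) + p + 1) + p := by ring
    linarith [hsplit, hNPcard, hid]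
  refine ⟨hTotal, hNormalCard, ?_⟩
  unfold sd
  rw [hPermCard, hTotal]
  push_cast
  ring
end
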